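/- There exists a sequence $(w_n)_{n\ge 1}$ of positive reals and an integer $N$ such that $w_n = e^{\gamma\sqrt{n}}/n^2$ for all $n \ge N$, and $w_{n+p} \le w_n w_p$ for all $n,p \ge 1$. -/
import Mathlib


open Real

private lemma sqrtdiff (x y : ℝ) (hx : 0 ≤ x) (hxy : x ≤ y) :
    Real.sqrt (x + y) ≤ Real.sqrt x / 2 + Real.sqrt y := by
  have hy : 0 ≤ y := hx.trans hxy
  have h1 : x ≤ Real.sqrt x * Real.sqrt y := by
    nth_rewrite 1 [← Real.mul_self_sqrt hx]
    exact mul_le_mul_of_nonneg_left (Real.sqrt_le_sqrt hxy) (Real.sqrt_nonneg x)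
  have h : x + y ≤ (Real.sqrt x / 2 + Real.sqrt y) ^ 2 := by
    have hx2 := Real.sq_sqrt hx
    have hy2 := Real.sq_sqrt hy
    nlinarith [Real.sqrt_nonneg x, Real.sqrt_nonneg y]
  calc Real.sqrt (x + y) ≤ Real.sqrt ((Real.sqrt x / 2 + Real.sqrt y) ^ 2) :=
        Real.sqrt_le_sqrt h
    _ = Real.sqrt x / 2 + Real.sqrt y := Real.sqrt_sq (by positivity)

/-- Real version of the key submultiplicativity estimate. -/
private lemma keyR (γ : ℝ) (hγ : 0 < γ) (a b : ℝ) (ha : 1 ≤ a) (hab : a ≤ b)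
    (ha2 : a ^ 2 ≤ Real.exp (γ * Real.sqrt a / 2)) :
    Real.exp (γ * Real.sqrt (a + b)) / (a + b) ^ 2 ≤
      Real.exp (γ * Real.sqrt a) / a ^ 2 * (Real.exp (γ * Real.sqrt b) / b ^ 2) := by
  have hb : 1 ≤ b := ha.trans hab
  have ha0 : (0:ℝ) < a := by linarith
  have hb0 : (0:ℝ) < b := by linarith
  rw [div_mul_div_comm, ← Real.exp_add]
  rw [div_le_div_iff₀ (by positivity) (by positivity)]
  set d : ℝ := Real.sqrt a + Real.sqrt b - Real.sqrt (a + b) with hd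
  have hdd : Real.sqrt a / 2 ≤ d := by
    have := sqrtdiff a b ha0.le hab
    simp only [hd]; linarith
  have h2 : a ^ 2 ≤ Real.exp (γ * d) := by
    refine ha2.trans (Real.exp_le_exp.mpr ?_)
    rw [div_eq_mul_inv, mul_assoc]
    have : Real.sqrt a * 2⁻¹ ≤ d := by linarith
    exact mul_le_mul_of_nonneg_left this hγ.le
  have h3 : b ^ 2 ≤ (a + b) ^ 2 := by nlinarith
  have h4 : a ^ 2 * b ^ 2 ≤ Real.exp (γ * d) * (a + b) ^ 2 :=
    mul_le_mul h2 h3 (by positivity) (Real.exp_pos _).le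
  have hsplit : γ * Real.sqrt a + γ * Real.sqrt b = γ * Real.sqrt (a + b) + γ * d := by
    simp only [hd]; ring
  calc Real.exp (γ * Real.sqrt (a + b)) * (a ^ 2 * b ^ 2)
      ≤ Real.exp (γ * Real.sqrt (a + b)) * (Real.exp (γ * d) * (a + b) ^ 2) := by
        gcongr
    _ = Real.exp (γ * Real.sqrt a + γ * Real.sqrt b) * (a + b) ^ 2 := by
        rw [hsplit, Real.exp_add]; ring

/-- There is a positive sequence `w` that equals `e^{γ√n}/n²` for large `n` and is
submultiplicative: `w_{n+p} ≤ w_n w_p` for all `n, p ≥ 1`. -/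
theorem stmt1 (γ : ℝ) (hγ : 0 < γ) :
    ∃ (w : ℕ → ℝ) (N : ℕ),
      (∀ n, 1 ≤ n → 0 < w n) ∧
      (∀ n, N ≤ n → w n = Real.exp (γ * Real.sqrt n) / (n : ℝ) ^ 2) ∧
      (∀ n p, 1 ≤ n → 1 ≤ p → w (n + p) ≤ w n * w p) := by
  set N : ℕ := max 1 (Nat.ceil ((10 / γ) ^ 10 : ℝ)) with hNdef
  have hN1 : 1 ≤ N := le_max_left _ _
  have hNc : ((10 / γ) ^ 10 : ℝ) ≤ N := by
    refine (Nat.le_ceil _).trans ?_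
    exact_mod_cast Nat.cast_le.mpr (le_max_right _ _)
  -- the key numeric bound for `m ≥ N`
  have key : ∀ m : ℕ, N ≤ m → (m : ℝ) ^ 2 ≤ Real.exp (γ * Real.sqrt m / 2) := by
    intro m hm
    have hmR : ((10 / γ) ^ 10 : ℝ) ≤ (m : ℝ) := hNc.trans (by exact_mod_cast hm)
    set t : ℝ := Real.sqrt m with ht
    have ht2 : t ^ 2 = (m : ℝ) := Real.sq_sqrt (by positivity)
    have htc : ((10 / γ) ^ 5 : ℝ) ≤ t := by
      have h1 : (((10 / γ) ^ 5 : ℝ)) ^ 2 ≤ (m : ℝ) := by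
        rw [← pow_mul]; norm_num; exact hmR
      calc ((10 / γ) ^ 5 : ℝ) = Real.sqrt ((((10 / γ) ^ 5 : ℝ)) ^ 2) :=
            (Real.sqrt_sq (by positivity)).symm
        _ ≤ t := Real.sqrt_le_sqrt h1
    have htpos : (0:ℝ) < t := lt_of_lt_of_le (by positivity) htc
    have hexp : (γ * t / 10) ^ 5 ≤ Real.exp (γ * t / 2) := by
      have h1 : γ * t / 10 ≤ Real.exp (γ * t / 10) := by
        have := Real.add_one_le_exp (γ * t / 10); linarith
      calc (γ * t / 10) ^ 5 ≤ Real.exp (γ * t / 10) ^ 5 :=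
            pow_le_pow_left₀ (by positivity) h1 5
        _ = Real.exp ((5 : ℕ) * (γ * t / 10)) := (Real.exp_nat_mul _ 5).symm
        _ = Real.exp (γ * t / 2) := by norm_num; ring_nf
    have hpoly : t ^ 4 ≤ (γ * t / 10) ^ 5 := by
      have h1 : (1:ℝ) ≤ (γ / 10) ^ 5 * t := by
        have he : ((γ / 10) ^ 5 : ℝ) * (10 / γ) ^ 5 = 1 := by
          field_simp
        calc (1:ℝ) = (γ / 10) ^ 5 * (10 / γ) ^ 5 := he.symm
          _ ≤ (γ / 10) ^ 5 * t := by gcongr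
      calc t ^ 4 = 1 * t ^ 4 := (one_mul _).symm
        _ ≤ ((γ / 10) ^ 5 * t) * t ^ 4 :=
            mul_le_mul_of_nonneg_right h1 (by positivity)
        _ = (γ * t / 10) ^ 5 := by ring
    have hm2 : (m : ℝ) ^ 2 = t ^ 4 := by rw [← ht2]; ring
    rw [hm2]
    exact hpoly.trans hexp
  -- the sequence
  set M : ℝ := Real.exp (γ * Real.sqrt (2 * N)) with hM
  have hM1 : 1 ≤ M := Real.one_le_exp (by positivity)
  set w : ℕ → ℝ := fun n => if n < N then M else Real.exp (γ * Real.sqrt n) / (n : ℝ) ^ 2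
    with hw
  have hweq : ∀ n, N ≤ n → w n = Real.exp (γ * Real.sqrt n) / (n : ℝ) ^ 2 := by
    intro n hn
    simp [hw, Nat.not_lt.mpr hn]
  have hwpos : ∀ n, 1 ≤ n → 0 < w n := by
    intro n hn
    by_cases h : n < N
    · simp only [hw, if_pos h]; exact lt_of_lt_of_le one_pos hM1
    · rw [hweq n (Nat.not_lt.mp h)]
      have : (0:ℝ) < (n:ℝ) := by exact_mod_cast hn
      positivity
  -- submultiplicativity for ordered pairs
  have H : ∀ n p : ℕ, 1 ≤ n → 1 ≤ p → n ≤ p → w (n + p) ≤ w n * w p := by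
    intro n p hn hp hnp
    by_cases hpN : p < N
    · -- both below N
      have hnN : n < N := lt_of_le_of_lt hnp hpN
      have hwn : w n = M := by simp [hw, hnN]
      have hwp : w p = M := by simp [hw, hpN]
      by_cases hs : n + p < N
      · have hws : w (n + p) = M := by simp [hw, hs]
        rw [hws, hwn, hwp]
        nlinarith
      · have hsN : N ≤ n + p := Nat.not_lt.mp hs
        rw [hweq _ hsN, hwn, hwp]
        have h1 : (1:ℝ) ≤ ((n + p : ℕ) : ℝ) := by
          exact_mod_cast hN1.trans hsN
        have hb : Real.exp (γ * Real.sqrt ((n + p : ℕ) : ℝ)) / ((n + p : ℕ) : ℝ) ^ 2 ≤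
            Real.exp (γ * Real.sqrt ((n + p : ℕ) : ℝ)) :=
          div_le_self (Real.exp_pos _).le (by nlinarith)
        refine hb.trans ?_
        have hle : ((n + p : ℕ) : ℝ) ≤ 2 * (N : ℝ) := by
          have : n + p ≤ 2 * N := by omega
          exact_mod_cast this
        have h2 : Real.exp (γ * Real.sqrt ((n + p : ℕ) : ℝ)) ≤ M := by
          rw [hM]
          exact Real.exp_le_exp.mpr
            (mul_le_mul_of_nonneg_left (Real.sqrt_le_sqrt hle) hγ.le)
        nlinarith
    · -- p ≥ N
      have hpN' : N ≤ p := Nat.not_lt.mp hpN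
      have hsN : N ≤ n + p := le_trans hpN' (Nat.le_add_left p n)
      have hnR : (1:ℝ) ≤ (n:ℝ) := by exact_mod_cast hn
      have hpR : (1:ℝ) ≤ (p:ℝ) := by exact_mod_cast hp
      have hnpR : (n:ℝ) ≤ (p:ℝ) := by exact_mod_cast hnp
      have hcast : ((n + p : ℕ) : ℝ) = (n:ℝ) + (p:ℝ) := by push_cast; ring
      by_cases hnN : n < N
      · -- small times large
        have hwn : w n = M := by simp [hw, hnN]
        rw [hweq _ hsN, hwn, hweq _ hpN', hcast]
        have hnum : Real.exp (γ * Real.sqrt ((n:ℝ) + (p:ℝ))) ≤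
            M * Real.exp (γ * Real.sqrt p) := by
          rw [hM, ← Real.exp_add]
          refine Real.exp_le_exp.mpr ?_
          have hs1 : Real.sqrt ((n:ℝ) + (p:ℝ)) ≤
              Real.sqrt n / 2 + Real.sqrt p := sqrtdiff _ _ (by positivity) hnpR
          have hs2 : Real.sqrt (n:ℝ) ≤ Real.sqrt (2 * (N:ℝ)) := by
            refine Real.sqrt_le_sqrt ?_
            have : (n:ℝ) ≤ (N:ℝ) := by exact_mod_cast hnN.le
            have hN0 : (0:ℝ) ≤ (N:ℝ) := by positivity
            linarith
          have : Real.sqrt ((n:ℝ) + (p:ℝ)) ≤ Real.sqrt (2 * (N:ℝ)) + Real.sqrt p := by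
            have h0 : Real.sqrt (n:ℝ) / 2 ≤ Real.sqrt (n:ℝ) := by
              have := Real.sqrt_nonneg (n:ℝ); linarith
            linarith
          nlinarith
        have hden : ((p:ℝ)) ^ 2 ≤ ((n:ℝ) + (p:ℝ)) ^ 2 := by nlinarith
        calc Real.exp (γ * Real.sqrt ((n:ℝ) + (p:ℝ))) / ((n:ℝ) + (p:ℝ)) ^ 2
            ≤ (M * Real.exp (γ * Real.sqrt p)) / (p:ℝ) ^ 2 :=
              div_le_div₀ (by positivity) hnum (by positivity) hden
          _ = M * (Real.exp (γ * Real.sqrt p) / (p:ℝ) ^ 2) := by ring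
      · -- both large
        have hnN' : N ≤ n := Nat.not_lt.mp hnN
        rw [hweq _ hsN, hweq _ hnN', hweq _ hpN', hcast]
        exact keyR γ hγ (n:ℝ) (p:ℝ) hnR hnpR (key n hnN')
  refine ⟨w, N, hwpos, hweq, ?_⟩
  intro n p hn hp
  rcases le_total n p with h | h
  · exact H n p hn hp h
  · rw [Nat.add_comm, mul_comm]
    exact H p n hp hn h
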